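/- arXiv:math/0512090 — 2 statements merged into one kernel-verified Lean document; each statement's English description precedes it below -/
import Mathlib

section
/- Let V be a real inner product space of dimension at least 2, let α, β : V → ℝ be linear functionals, and let K ∈ ℝ. If α(u)·β(u) = K·‖u‖² for every u ∈ V, then K = 0. -/
theorem LinearMap.exists_ne_zero_map_eq_zero_of_two_le_rank {R V : Type*} [Ring R]
    [StrongRankCondition R] [AddCommGroup V] [Module R V]
    (hV : 2 ≤ Module.rank R V) (f : V →ₗ[R] R) : ∃ v ≠ 0, f v = 0 := by
  by_contra! hf
  have hinj : Function.Injective f := (injective_iff_map_eq_zero f).mpr fun v hv =>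
    not_not.mp fun hv0 => hf v hv0 hv
  have hle := LinearMap.lift_rank_le_of_injective f hinj
  rw [Module.rank_self, Cardinal.lift_one, Cardinal.lift_le_one_iff] at hle
  exact absurd (hV.trans hle) (by norm_num)

/-- A product of two real linear functionals on an inner product space of
dimension at least two cannot equal a nonzero constant multiple of the
square of the norm. -/
theorem product_of_linear_forms_ne_norm_sq
    {V : Type*} [NormedAddCommGroup V] [InnerProductSpace ℝ V]
    (hV : 2 ≤ Module.rank ℝ V)
    (α β : V →ₗ[ℝ] ℝ) (K : ℝ)
    (h : ∀ u : V, α u * β u = K * ‖u‖ ^ 2) :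
    K = 0 := by
  obtain ⟨v, hv, hαv⟩ := α.exists_ne_zero_map_eq_zero_of_two_le_rank hV
  have hKv : K * ‖v‖ ^ 2 = 0 := by rw [← h v, hαv, zero_mul]
  exact (mul_eq_zero.mp hKv).resolve_right (pow_ne_zero 2 (norm_ne_zero_iff.mpr hv))
end

section
/- Let V be a real inner product space of dimension at least 2, let α, β : V → ℝ be linear functionals, and let K ∈ ℝ. If α(v)·β(v) = K for every unit vector v ∈ V, then K = 0. -/
theorem LinearMap.ker_ne_bot_of_two_le_rank {R V : Type*} [Ring R] [StrongRankCondition R]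
    [AddCommGroup V] [Module R V] (hV : 2 ≤ Module.rank R V) (f : V →ₗ[R] R) :
    LinearMap.ker f ≠ ⊥ := by
  intro hker
  have hle : Cardinal.lift (Module.rank R V) ≤ Cardinal.lift (Module.rank R R) :=
    f.lift_rank_le_of_injective (LinearMap.ker_eq_bot.1 hker)
  rw [Module.rank_self, Cardinal.lift_one, Cardinal.lift_le_one_iff] at hle
  exact absurd (hV.trans hle) (by norm_num)

theorem LinearMap.exists_norm_eq_one_apply_eq_zero {𝕜 V : Type*} [RCLike 𝕜]
    [NormedAddCommGroup V] [NormedSpace 𝕜 V] (hV : 2 ≤ Module.rank 𝕜 V) (f : V →ₗ[𝕜] 𝕜) :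
    ∃ u : V, ‖u‖ = 1 ∧ f u = 0 := by
  obtain ⟨v, hv, hv0⟩ := (Submodule.ne_bot_iff _).1 (f.ker_ne_bot_of_two_le_rank hV)
  refine ⟨(‖v‖ : 𝕜)⁻¹ • v, norm_smul_inv_norm hv0, ?_⟩
  rw [map_smul, LinearMap.mem_ker.1 hv, smul_zero]

/-- If a rank-one bilinear form `α ⊗ β` built from two linear functionals takes
the same value `K` on every unit vector of an inner product space of dimension
at least two, then `K = 0`. -/
theorem product_of_linear_forms_const_on_sphere
    {V : Type*} [NormedAddCommGroup V] [InnerProductSpace ℝ V]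
    (hV : 2 ≤ Module.rank ℝ V)
    (α β : V →ₗ[ℝ] ℝ) (K : ℝ)
    (h : ∀ v : V, ‖v‖ = 1 → α v * β v = K) :
    K = 0 := by
  obtain ⟨u, hu, hαu⟩ := α.exists_norm_eq_one_apply_eq_zero hV
  rw [← h u hu, hαu, zero_mul]
end
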